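/- Let d ≥ 1, let λ be a partition of n, let μ be a partition of n−d, and let β be the nonincreasing rearrangement of the composition (d, μ₁, …, μ_l). Suppose that (1) β is dominated by λ, i.e. β₁ + … + β_k ≤ λ₁ + … + λ_k for every k (treating missing parts as 0), and (2) n² − ∑_j ((λᵗ)_j)² ≤ [(n−d)² − ∑_j ((μᵗ)_j)²] + (2n−d)(d−1). Then λ = (d, μ₁, …, μ_l); in particular d ≥ μ₁. -/

import Mathlib

/-!
For a partition `λ` (parts indexed from `0`), `∑ⱼ ((λᵗ)ⱼ)² = ∑ᵢ (2i+1) λᵢ`, and the right-hand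
side equals `(2N-1)|λ| - 2 ∑_{k<N} (λ₀ + ⋯ + λ_{k-1})` for any `N ≥ ℓ(λ)`. Hence if `λ` dominates
`β` then `∑ (λᵗ)² ≤ ∑ (βᵗ)²`, with equality only when `λ = β`. On the other hand, adding a part `d`
to `μ` adds `2 ∑ᵢ min(μᵢ, d) + d ≤ 2(n - d) + d` to `∑ (μᵗ)²`, with equality iff every `μᵢ ≤ d`.
Hypothesis (2) says exactly `∑ (λᵗ)² ≥ ∑ (μᵗ)² + 2n - d`, so both inequalities are equalities:
`λ = β`, and `β = (d, μ)` is already sorted.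
-/

/-- The `j`-th part of the transpose (conjugate) partition of a partition `l`:
`(lᵗ)_j = #{i : lᵢ ≥ j}`. -/
def conjPart (l : List ℕ) (j : ℕ) : ℕ := (l.filter (fun a => decide (j ≤ a))).length

open Finset

lemma conjPart_perm {l l' : List ℕ} (h : l.Perm l') (j : ℕ) : conjPart l j = conjPart l' j :=
  (h.filter _).length_eq

lemma conjPart_cons (a : ℕ) (l : List ℕ) (j : ℕ) :
    conjPart (a :: l) j = conjPart l j + if j ≤ a then 1 else 0 := by
  simp only [conjPart, List.filter_cons]
  split <;> simp_all

lemma sum_Icc_ite_le (M a : ℕ) (f : ℕ → ℕ) :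
    ∑ j ∈ Icc 1 M, (if j ≤ a then f j else 0) = ∑ j ∈ Icc 1 (min a M), f j := by
  rw [← sum_filter]
  congr 1
  ext j
  simp only [mem_filter, mem_Icc]
  omega

lemma sum_Icc_conjPart (M : ℕ) (l : List ℕ) :
    ∑ j ∈ Icc 1 M, conjPart l j = (l.map (min · M)).sum := by
  induction l with
  | nil => simp [conjPart]
  | cons a t ih =>
    simp only [conjPart_cons, sum_add_distrib, ih, sum_Icc_ite_le M a (fun _ => 1)]
    simp [add_comm]

lemma sum_Icc_sq_conjPart_cons {M a : ℕ} (l : List ℕ) (ha : a ≤ M) :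
    ∑ j ∈ Icc 1 M, conjPart (a :: l) j ^ 2
      = ∑ j ∈ Icc 1 M, conjPart l j ^ 2 + 2 * (l.map (min · a)).sum + a := by
  have expand : ∀ j, conjPart (a :: l) j ^ 2 = conjPart l j ^ 2
      + 2 * (if j ≤ a then conjPart l j else 0) + if j ≤ a then 1 else 0 := by
    intro j
    rw [conjPart_cons]
    split <;> ring
  simp only [expand, sum_add_distrib, ← mul_sum, sum_Icc_ite_le, sum_Icc_ite_le M a (fun _ => 1),
    min_eq_left ha, sum_Icc_conjPart]
  simp

lemma sum_map_min_le (l : List ℕ) (d : ℕ) : (l.map (min · d)).sum ≤ l.sum := by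
  induction l with
  | nil => simp
  | cons a t ih => simp only [List.map_cons, List.sum_cons]; omega

lemma sum_map_min_eq_sum_iff {l : List ℕ} {d : ℕ} :
    (l.map (min · d)).sum = l.sum ↔ ∀ x ∈ l, x ≤ d := by
  induction l with
  | nil => simp
  | cons a t ih =>
    have := sum_map_min_le t d
    simp only [List.map_cons, List.sum_cons, List.forall_mem_cons, ← ih]
    omega

/-- `weightedSum l = ∑ᵢ (2i+1) lᵢ`, with indices starting at `0`. -/
def weightedSum : List ℕ → ℕ
  | [] => 0
  | a :: t => a + 2 * t.sum + weightedSum t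

lemma sum_Icc_sq_conjPart {M : ℕ} {l : List ℕ} (hl : l.Pairwise (· ≥ ·)) (hM : ∀ x ∈ l, x ≤ M) :
    ∑ j ∈ Icc 1 M, conjPart l j ^ 2 = weightedSum l := by
  induction l with
  | nil => simp [conjPart, weightedSum]
  | cons a t ih =>
    obtain ⟨hta, ht⟩ := List.pairwise_cons.mp hl
    rw [List.forall_mem_cons] at hM
    rw [sum_Icc_sq_conjPart_cons t hM.1, ih ht hM.2, sum_map_min_eq_sum_iff.mpr hta, weightedSum]
    ring

def partialSum (l : List ℕ) (k : ℕ) : ℕ := ∑ i ∈ range k, l.getD i 0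

lemma partialSum_zero (l : List ℕ) : partialSum l 0 = 0 := rfl

lemma partialSum_nil (k : ℕ) : partialSum [] k = 0 := by simp [partialSum]

lemma partialSum_cons_succ (a : ℕ) (t : List ℕ) (k : ℕ) :
    partialSum (a :: t) (k + 1) = a + partialSum t k := by
  simp only [partialSum, sum_range_succ']
  simp [add_comm]

lemma partialSum_of_length_le {l : List ℕ} {k : ℕ} (h : l.length ≤ k) : partialSum l k = l.sum := by
  induction l generalizing k with
  | nil => simp [partialSum_nil]
  | cons a t ih =>
    obtain ⟨m, rfl⟩ : ∃ m, k = m + 1 := Nat.exists_eq_add_one.mpr (by simp at h; omega)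
    rw [partialSum_cons_succ, ih (by simpa using h), List.sum_cons]

lemma sum_range_partialSum_cons (a : ℕ) (t : List ℕ) (m : ℕ) :
    ∑ k ∈ range (m + 1), partialSum (a :: t) k = m * a + ∑ k ∈ range m, partialSum t k := by
  rw [sum_range_succ']
  simp [partialSum_cons_succ, sum_add_distrib, partialSum_zero]

lemma weightedSum_add_sum_range_partialSum {l : List ℕ} {N : ℕ} (h : l.length ≤ N) :
    weightedSum l + 2 * ∑ k ∈ range N, partialSum l k + l.sum = 2 * N * l.sum := by
  induction l generalizing N with
  | nil => simp [weightedSum, partialSum_nil]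
  | cons a t ih =>
    obtain ⟨m, rfl⟩ : ∃ m, N = m + 1 := Nat.exists_eq_add_one.mpr (by simp at h; omega)
    have := ih (N := m) (by simpa using h)
    rw [sum_range_partialSum_cons, weightedSum, List.sum_cons]
    nlinarith

lemma eq_of_partialSum_eq {l l' : List ℕ} (hl : ∀ x ∈ l, 0 < x) (hl' : ∀ x ∈ l', 0 < x)
    (h : ∀ k, partialSum l k = partialSum l' k) : l = l' := by
  induction l generalizing l' with
  | nil =>
    cases l' with
    | nil => rfl
    | cons b t' =>
      have := h 1
      rw [partialSum_nil, partialSum_cons_succ, partialSum_zero] at this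
      have := hl' b List.mem_cons_self
      omega
  | cons a t ih =>
    cases l' with
    | nil =>
      have := h 1
      rw [partialSum_nil, partialSum_cons_succ, partialSum_zero] at this
      have := hl a List.mem_cons_self
      omega
    | cons b t' =>
      rw [List.forall_mem_cons] at hl hl'
      have hab : a = b := by simpa [partialSum_cons_succ, partialSum_zero] using h 1
      subst hab
      congr
      exact ih hl.2 hl'.2 fun k => by simpa [partialSum_cons_succ] using h (k + 1)

section Dominance

variable {l l' : List ℕ}

lemma weightedSum_add_sum_partialSum_eq (hsum : l.sum = l'.sum) :
    weightedSum l + 2 * ∑ k ∈ range (max l.length l'.length), partialSum l k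
      = weightedSum l' + 2 * ∑ k ∈ range (max l.length l'.length), partialSum l' k := by
  have h := weightedSum_add_sum_range_partialSum (le_max_left l.length l'.length)
  have h' := weightedSum_add_sum_range_partialSum (le_max_right l.length l'.length)
  rw [hsum] at h
  omega

lemma weightedSum_le_of_dominates (hsum : l.sum = l'.sum)
    (hdom : ∀ k, partialSum l' k ≤ partialSum l k) : weightedSum l ≤ weightedSum l' := by
  have := weightedSum_add_sum_partialSum_eq hsum
  have := sum_le_sum fun k (_ : k ∈ range (max l.length l'.length)) => hdom k
  omega

lemma eq_of_dominates_of_weightedSum_le (hsum : l.sum = l'.sum)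
    (hdom : ∀ k, partialSum l' k ≤ partialSum l k) (hl : ∀ x ∈ l, 0 < x) (hl' : ∀ x ∈ l', 0 < x)
    (hw : weightedSum l' ≤ weightedSum l) : l = l' := by
  have := weightedSum_add_sum_partialSum_eq hsum
  have := sum_le_sum fun k (_ : k ∈ range (max l.length l'.length)) => hdom k
  set N := max l.length l'.length
  have hlt : ∀ k ∈ range N, partialSum l' k = partialSum l k :=
    (sum_eq_sum_iff_of_le fun k _ => hdom k).mp (by omega)
  refine eq_of_partialSum_eq hl hl' fun k => ?_
  rcases lt_or_ge k N with hk | hk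
  · exact (hlt k (mem_range.mpr hk)).symm
  · rw [partialSum_of_length_le (le_of_max_le_left hk),
      partialSum_of_length_le (le_of_max_le_right hk), hsum]

end Dominance

/-- Let `d ≥ 1`, `λ` a partition of `n`, `μ` a partition of `n − d`,
and `β` the nonincreasing rearrangement of the composition `(d, μ₁, …, μ_l)`.
Assume (1) `β` is dominated by `λ` (`β₁+…+β_k ≤ λ₁+…+λ_k` for all `k`, missing parts
being `0`), and (2) `n² − ∑_j ((λᵗ)_j)² ≤ (n−d)² − ∑_j ((μᵗ)_j)² + (2n−d)(d−1)`.
Then `λ = (d, μ₁, …, μ_l)`; in particular `d ≥ μ₁`. -/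
theorem stmt_7 (n d : ℕ) (hd : 1 ≤ d) (hdn : d ≤ n)
    (lam μ β : List ℕ)
    (hlampos : ∀ x ∈ lam, 0 < x) (hlamsort : lam.Pairwise (· ≥ ·)) (hlamsum : lam.sum = n)
    (hμpos : ∀ x ∈ μ, 0 < x) (hμsort : μ.Pairwise (· ≥ ·)) (hμsum : μ.sum = n - d)
    (hβperm : (d :: μ).Perm β) (hβsort : β.Pairwise (· ≥ ·))
    (hdom : ∀ k : ℕ, ∑ i ∈ Finset.range k, β.getD i 0 ≤ ∑ i ∈ Finset.range k, lam.getD i 0)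
    (hdim : (n : ℤ) ^ 2 - ∑ j ∈ Finset.Icc 1 n, (conjPart lam j : ℤ) ^ 2
        ≤ ((n - d : ℕ) : ℤ) ^ 2 - ∑ j ∈ Finset.Icc 1 n, (conjPart μ j : ℤ) ^ 2
          + (2 * (n : ℤ) - d) * ((d : ℤ) - 1)) :
    lam = d :: μ := by
  have hβsum : β.sum = n := by rw [← hβperm.sum_eq, List.sum_cons, hμsum]; omega
  have hsum : lam.sum = β.sum := hlamsum.trans hβsum.symm
  have hβpos : ∀ x ∈ β, 0 < x := by
    intro x hx
    rcases List.mem_cons.mp (hβperm.mem_iff.mpr hx) with rfl | hxμ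
    exacts [hd, hμpos x hxμ]
  have hwlam : ∑ j ∈ Icc 1 n, conjPart lam j ^ 2 = weightedSum lam :=
    sum_Icc_sq_conjPart hlamsort fun x hx => hlamsum ▸ List.le_sum_of_mem hx
  have hwβ : weightedSum β
      = ∑ j ∈ Icc 1 n, conjPart μ j ^ 2 + 2 * (μ.map (min · d)).sum + d := by
    rw [← sum_Icc_sq_conjPart hβsort fun x hx => hβsum ▸ List.le_sum_of_mem hx,
      ← sum_Icc_sq_conjPart_cons μ hdn]
    simp only [conjPart_perm hβperm]
  have hdim' : ∑ j ∈ Icc 1 n, conjPart μ j ^ 2 + 2 * n ≤ ∑ j ∈ Icc 1 n, conjPart lam j ^ 2 + d := by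
    zify
    push_cast [Nat.cast_sub hdn] at hdim ⊢
    linarith
  have hmin := sum_map_min_le μ d
  have hle := weightedSum_le_of_dominates hsum hdom
  have hμd : ∀ x ∈ μ, x ≤ d := sum_map_min_eq_sum_iff.mp (by omega)
  have hβ : β = d :: μ :=
    (hβperm.eq_of_pairwise' (List.pairwise_cons.mpr ⟨hμd, hμsort⟩) hβsort).symm
  rw [eq_of_dominates_of_weightedSum_le hsum hdom hlampos hβpos (by omega), hβ]
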